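/- arXiv:math/0703299 — 6 statements merged into one kernel-verified Lean document; each statement's English description precedes it below -/
import Mathlib

section
/- Let R be a local integral domain and let f_1, …, f_r ∈ R be elements such that the ideal ⟨f_i, f_j⟩ is principal for all i, j ∈ {1, …, r}. Then the ideal ⟨f_1, …, f_r⟩ is principal; more precisely, there is an index k ∈ {1, …, r} such that ⟨f_1, …, f_r⟩ = ⟨f_k⟩. -/
/-!
Write `⟨a, b⟩ = ⟨d⟩` with `a = x d`, `b = y d` and `d = u a + v b`, so that `d = (u x + v y) d`.
In a local ring either `u x + v y` is a unit, and then so is `x` or `y`, making `a` or `b` a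
generator of `⟨d⟩`; or `1 - (u x + v y)` is a unit, and then `d = 0`. Hence the principal ideals
`⟨f i⟩` form a finite chain, whose largest member is `⟨f 1, …, f r⟩`.
-/

namespace IsLocalRing

theorem dvd_or_dvd_of_isPrincipal_span_pair {R : Type*} [CommRing R] [IsLocalRing R] {a b : R}
    (h : (Ideal.span {a, b}).IsPrincipal) : a ∣ b ∨ b ∣ a := by
  obtain ⟨d, hd⟩ := h
  rw [Ideal.submodule_span_eq] at hd
  obtain ⟨x, rfl⟩ := Ideal.mem_span_singleton'.mp (hd ▸ Ideal.subset_span (by simp) : a ∈ _)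
  obtain ⟨y, rfl⟩ := Ideal.mem_span_singleton'.mp (hd ▸ Ideal.subset_span (by simp) : b ∈ _)
  obtain ⟨u, v, huv⟩ := Ideal.mem_span_pair.mp (hd ▸ Ideal.mem_span_singleton_self d)
  rcases isUnit_or_isUnit_one_sub_self (u * x + v * y) with hs | hs
  · rcases isUnit_or_isUnit_of_isUnit_add hs with hx | hy
    · exact .inl ((isUnit_of_mul_isUnit_right hx).mul_left_dvd.mpr (dvd_mul_left d y))
    · exact .inr ((isUnit_of_mul_isUnit_right hy).mul_left_dvd.mpr (dvd_mul_left d x))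
  · have hd0 : d = 0 := hs.mul_right_eq_zero.mp (by linear_combination -huv)
    simp [hd0]

end IsLocalRing

theorem Ideal.span_range_eq_span_singleton_of_dvd {ι R : Type*} [CommSemiring R] {f : ι → R}
    {k : ι} (hk : ∀ i, f k ∣ f i) : Ideal.span (Set.range f) = Ideal.span {f k} := by
  refine le_antisymm (Ideal.span_le.mpr ?_) (Ideal.span_mono (by simp))
  rintro _ ⟨i, rfl⟩
  exact Ideal.mem_span_singleton.mpr (hk i)

theorem exists_forall_dvd_of_dvd_total {ι R : Type*} [Finite ι] [Nonempty ι] [CommMonoid R]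
    {f : ι → R} (htot : ∀ i j, f i ∣ f j ∨ f j ∣ f i) : ∃ k, ∀ i, f k ∣ f i := by
  have hdir : Directed (fun a b => b ∣ a) f := fun i j => by
    rcases htot i j with h | h
    exacts [⟨i, dvd_rfl, h⟩, ⟨j, h, dvd_rfl⟩]
  simpa using hdir.finite_le id

theorem stmt2_general {R : Type*} [CommRing R] [IsLocalRing R]
    {r : ℕ} (hr : 0 < r) (f : Fin r → R)
    (hpr : ∀ i j : Fin r, (Ideal.span {f i, f j}).IsPrincipal) :
    (Ideal.span (Set.range f)).IsPrincipal ∧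
      ∃ k : Fin r, Ideal.span (Set.range f) = Ideal.span {f k} := by
  have : Nonempty (Fin r) := ⟨⟨0, hr⟩⟩
  obtain ⟨k, hk⟩ := exists_forall_dvd_of_dvd_total fun i j =>
    IsLocalRing.dvd_or_dvd_of_isPrincipal_span_pair (hpr i j)
  have heq := Ideal.span_range_eq_span_singleton_of_dvd hk
  exact ⟨heq ▸ ⟨f k, rfl⟩, k, heq⟩

/-- Lemma `divisor`(2), second part, of Jow–Miller: in a local integral domain,
if every pairwise-generated ideal `⟨f i, f j⟩` is principal, then the ideal
`⟨f 1, …, f r⟩` is principal; more precisely it is generated by some `f k`. -/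
theorem stmt2 {R : Type*} [CommRing R] [IsDomain R] [IsLocalRing R]
    {r : ℕ} (hr : 0 < r) (f : Fin r → R)
    (hpr : ∀ i j : Fin r, (Ideal.span {f i, f j}).IsPrincipal) :
    (Ideal.span (Set.range f)).IsPrincipal ∧
      ∃ k : Fin r, Ideal.span (Set.range f) = Ideal.span {f k} :=
  stmt2_general hr f hpr
end

section
/- Let Γ ⊆ ℝ^d be a finite nonempty set. If γ ∈ ℤ^d satisfies γ + 𝟙 ∈ interior(conv(Γ) + ℝ^d_{≥0}), then there exists ν in the convex hull of Γ such that ⌊ν⌋ ≤ γ componentwise. -/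
open Pointwise

/-- For a finite nonempty set `Γ ⊆ ℝ^d`, if `γ ∈ ℤ^d` satisfies
`γ + 𝟙 ∈ interior(conv(Γ) + ℝ^d_{≥0})`, then some `ν ∈ conv(Γ)` has
`⌊ν⌋ ≤ γ` componentwise. -/
theorem stmt5 {d : ℕ} (Γ : Finset (Fin d → ℝ)) (hΓ : Γ.Nonempty)
    (γ : Fin d → ℤ)
    (hγ : (fun j => (γ j : ℝ) + 1) ∈
      interior (convexHull ℝ (↑Γ : Set (Fin d → ℝ)) +
        {v : Fin d → ℝ | ∀ j, 0 ≤ v j})) :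
    ∃ ν ∈ convexHull ℝ (↑Γ : Set (Fin d → ℝ)), ∀ j, ⌊ν j⌋ ≤ γ j := by
  obtain ⟨ε, hε, hball⟩ := Metric.isOpen_iff.mp isOpen_interior _ hγ
  set p : Fin d → ℝ := fun j => (γ j : ℝ) + 1 - ε / 2 with hp
  have hpmem : p ∈ Metric.ball (fun j => (γ j : ℝ) + 1) ε := by
    rw [Metric.mem_ball]
    have h1 : dist p (fun j => (γ j : ℝ) + 1) ≤ ε / 2 := by
      apply dist_pi_le_iff (by linarith) |>.mpr
      intro i
      simp [hp, Real.dist_eq, abs_of_nonneg, le_of_lt hε, abs_of_pos,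
        half_pos hε]
    linarith
  have hmem : p ∈ convexHull ℝ (↑Γ : Set (Fin d → ℝ)) +
      {v : Fin d → ℝ | ∀ j, 0 ≤ v j} := interior_subset (hball hpmem)
  obtain ⟨ν, hν, v, hv, hsum⟩ := hmem
  refine ⟨ν, hν, fun j => ?_⟩
  have hj : ν j + v j = p j := congrFun hsum j
  have hlt : ν j < (γ j : ℝ) + 1 := by
    have := hv j
    simp only [hp] at hj
    linarith
  have h2 : ⌊ν j⌋ < γ j + 1 := Int.floor_lt.mpr (by push_cast; exact hlt)
  omega
end

section
/- Let Γ ⊆ ℝ^d_{≥0} be a finite nonempty set. In the polynomial ring ℂ[x_1,…,x_d], the ideal generated by the monomials x^{⌊ν⌋} for all ν ∈ conv(Γ) equals the ideal generated by the monomials x^γ for all γ ∈ ℕ^d with γ + 𝟙 ∈ interior(conv(Γ) + ℝ^d_{≥0}). (Applied to Γ = {α·γ_1, …, α·γ_r}, this identifies the description of the multiplier ideal J(a^α) of the monomial ideal a = ⟨x^{γ_1},…,x^{γ_r}⟩ via integer parts of points of conv{α·γ_1,…,α·γ_r} with Howald's description via lattice points whose shift by 𝟙 lies in the interior of the Newton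 polyhedron.) -/
open Pointwise

/-- The monomial `x^γ` of `ℂ[x_1,…,x_d]` with exponent vector `γ : Fin d → ℕ`. -/
noncomputable def monoOf {d : ℕ} (γ : Fin d → ℕ) : MvPolynomial (Fin d) ℂ :=
  MvPolynomial.monomial (Finsupp.equivFunOnFinite.symm γ) 1

lemma monoOf_mul {d : ℕ} (a b : Fin d → ℕ) : monoOf a * monoOf b = monoOf (a + b) := by
  unfold monoOf
  rw [MvPolynomial.monomial_mul, one_mul]
  have h : Finsupp.equivFunOnFinite.symm a + Finsupp.equivFunOnFinite.symm b
      = Finsupp.equivFunOnFinite.symm (a + b) := by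
    ext j; simp
  rw [h]

lemma convexQ {d : ℕ} : Convex ℝ {v : Fin d → ℝ | ∀ j, 0 ≤ v j} := by
  intro x hx y hy a b ha hb hab j
  have := hx j
  have := hy j
  simp only [Pi.add_apply, Pi.smul_apply, smul_eq_mul]
  positivity

/-- Key forward lemma -/
lemma mem_int {d : ℕ} (P : Set (Fin d → ℝ)) {ν : Fin d → ℝ} (hν : ν ∈ P)
    {x : Fin d → ℝ} (hx : ∀ j, ν j < x j) :
    x ∈ interior (P + {v : Fin d → ℝ | ∀ j, 0 ≤ v j}) := by
  have hU : IsOpen {y : Fin d → ℝ | ∀ j, ν j < y j} := by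
    have : {y : Fin d → ℝ | ∀ j, ν j < y j} = ⋂ j, {y : Fin d → ℝ | ν j < y j} := by
      ext y; simp [Set.mem_iInter]
    rw [this]
    exact isOpen_iInter_of_finite fun j => isOpen_lt continuous_const (continuous_apply j)
  have hsub : {y : Fin d → ℝ | ∀ j, ν j < y j} ⊆
      P + {v : Fin d → ℝ | ∀ j, 0 ≤ v j} := by
    intro y hy
    refine ⟨ν, hν, y - ν, fun j => ?_, by funext j; simp only [Pi.add_apply, Pi.sub_apply]; ring⟩
    have := hy j
    simp only [Pi.sub_apply]
    linarith
  exact interior_maximal hsub hU hx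

/-- Key backward lemma -/
lemma of_mem_int {d : ℕ} (P : Set (Fin d → ℝ)) {x : Fin d → ℝ}
    (hx : x ∈ interior (P + {v : Fin d → ℝ | ∀ j, 0 ≤ v j})) :
    ∃ ν ∈ P, ∀ j, ν j < x j := by
  rw [mem_interior_iff_mem_nhds, Metric.mem_nhds_iff] at hx
  obtain ⟨ε, hε, hball⟩ := hx
  have hyb : (fun j => x j - ε / 2) ∈ Metric.ball x ε := by
    rw [Metric.mem_ball]
    have : dist (fun j => x j - ε / 2) x ≤ ε / 2 := by
      rw [dist_pi_le_iff (by linarith)]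
      intro i
      have h : x i - ε / 2 - x i = -(ε / 2) := by ring
      rw [Real.dist_eq, h, abs_neg, abs_of_nonneg (by linarith)]
    linarith
  obtain ⟨ν, hν, w, hw, hsum⟩ := hball hyb
  refine ⟨ν, hν, fun j => ?_⟩
  have h1 : ν j + w j = x j - ε / 2 := congrFun hsum j
  have h2 : 0 ≤ w j := hw j
  linarith

/-- Equivalence of the two descriptions of the multiplier ideal of a monomial
ideal (Corollary `c:3` of Jow–Miller versus Howald's formula): for a finite
nonempty `Γ ⊆ ℝ^d_{≥0}`, the ideal of `ℂ[x_1,…,x_d]` generated by the monomials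
`x^⌊ν⌋` for `ν ∈ conv(Γ)` equals the ideal generated by the monomials `x^γ`
for `γ ∈ ℕ^d` with `γ + 𝟙 ∈ interior(conv(Γ) + ℝ^d_{≥0})`. -/
theorem stmt6 {d : ℕ} (Γ : Finset (Fin d → ℝ)) (hne : Γ.Nonempty)
    (hΓ : ∀ ν ∈ Γ, ∀ j, 0 ≤ ν j) :
    Ideal.span {p : MvPolynomial (Fin d) ℂ |
        ∃ ν ∈ convexHull ℝ (↑Γ : Set (Fin d → ℝ)),
          p = monoOf fun j => (⌊ν j⌋).toNat}
      = Ideal.span {p : MvPolynomial (Fin d) ℂ |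
        ∃ γ : Fin d → ℕ,
          (fun j => (γ j : ℝ) + 1) ∈
            interior (convexHull ℝ (↑Γ : Set (Fin d → ℝ)) +
              {v : Fin d → ℝ | ∀ j, 0 ≤ v j}) ∧
          p = monoOf γ} := by
  set P := convexHull ℝ (↑Γ : Set (Fin d → ℝ)) with hP
  have hPQ : ∀ ν ∈ P, ∀ j, (0:ℝ) ≤ ν j := by
    intro ν hν
    exact convexHull_min (fun μ hμ j => hΓ μ hμ j) convexQ hν
  apply le_antisymm
  · rw [Ideal.span_le]
    rintro p ⟨ν, hν, rfl⟩
    apply Ideal.subset_span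
    refine ⟨fun j => (⌊ν j⌋).toNat, ?_, rfl⟩
    apply mem_int P hν
    intro j
    have h0 : (0:ℝ) ≤ ν j := hPQ ν hν j
    have h1 : ((⌊ν j⌋).toNat : ℤ) = ⌊ν j⌋ := Int.toNat_of_nonneg (Int.floor_nonneg.mpr h0)
    have h2 : ((⌊ν j⌋).toNat : ℝ) = ((⌊ν j⌋ : ℤ) : ℝ) := by exact_mod_cast h1
    rw [h2]
    exact Int.lt_floor_add_one (ν j)
  · rw [Ideal.span_le]
    rintro p ⟨γ, hγ, rfl⟩
    obtain ⟨ν, hν, hlt⟩ := of_mem_int P hγ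
    set δ : Fin d → ℕ := fun j => (⌊ν j⌋).toNat with hδ
    have hle : ∀ j, δ j ≤ γ j := by
      intro j
      rw [hδ]
      rw [Int.toNat_le]
      have : ⌊ν j⌋ < (γ j : ℤ) + 1 := by
        rw [Int.floor_lt]
        push_cast
        exact hlt j
      omega
    have : monoOf γ = monoOf (γ - δ) * monoOf δ := by
      rw [monoOf_mul]
      congr 1
      ext j
      simp only [Pi.add_apply, Pi.sub_apply]
      have := hle j
      omega
    rw [this]
    apply Ideal.mul_mem_left
    exact Ideal.subset_span ⟨ν, hν, rfl⟩
end

section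
/- Let Γ_1, …, Γ_r ⊆ ℕ^d be finite nonempty sets and let α > 0 be a real number. In the polynomial ring ℂ[x_1,…,x_d], the ideal generated by the monomials x^m, for m ∈ ℕ^d with m + 𝟙 ∈ interior(α·conv(Γ_1 ∪ ⋯ ∪ Γ_r) + ℝ^d_{≥0}), equals the sum, over all λ = (λ_1,…,λ_r) ∈ ℝ^r_{≥0} with λ_1 + ⋯ + λ_r = α, of the ideals generated by the monomials x^m, for m ∈ ℕ^d with m + 𝟙 ∈ interior(λ_1·conv(Γ_1) + ⋯ + λ_r·conv(Γ_r) + ℝ^d_{≥0}). (By Howald's formula this is the multiplier ideal summation formula J((a_1+⋯+a_r)^α) = Σ_{λ_1+⋯+λ_r=α} J(a_1^{λ_1}⋯a_r^{λ_r}) for the monomial ideals a_i with exponent sets Γ_i.) -/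
open Pointwise

/-- The real point of `ℝ^d` corresponding to `γ : Fin d → ℕ`. -/
def toReal {d : ℕ} (γ : Fin d → ℕ) : Fin d → ℝ := fun j => (γ j : ℝ)

section Aux

variable {d r : ℕ}

/-- A point strictly above a point of `S + ℝ≥0` is interior. -/
lemma aux_mem_interior {S : Set (Fin d → ℝ)} {x : Fin d → ℝ} {ε : ℝ}
    (hε : 0 < ε) (h : (fun j => x j - ε) ∈ S + {v : Fin d → ℝ | ∀ j, 0 ≤ v j}) :
    x ∈ interior (S + {v : Fin d → ℝ | ∀ j, 0 ≤ v j}) := by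
  obtain ⟨s, hs, w, hw, hsw⟩ := h
  refine mem_interior.2 ⟨{y | ∀ j, s j < y j}, ?_, ?_, ?_⟩
  · intro y hy
    refine ⟨s, hs, y - s, fun j => ?_, by funext j; simp⟩
    have := hy j
    simp only [Pi.sub_apply]
    linarith
  · have : {y : Fin d → ℝ | ∀ j, s j < y j} = ⋂ j, {y : Fin d → ℝ | s j < y j} := by
      ext y; simp [Set.mem_iInter]
    rw [this]
    exact isOpen_iInter_of_finite fun j =>
      isOpen_lt continuous_const (continuous_apply j)
  · intro j
    have h1 : s j + w j = x j - ε := congrFun hsw j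
    have h2 : 0 ≤ w j := hw j
    show s j < x j
    linarith

lemma aux_exists_eps {T : Set (Fin d → ℝ)} {x : Fin d → ℝ} (h : x ∈ interior T) :
    ∃ ε : ℝ, 0 < ε ∧ (fun j => x j - ε) ∈ T := by
  obtain ⟨δ, hδ, hball⟩ := Metric.isOpen_iff.1 isOpen_interior x h
  refine ⟨δ / 2, by linarith, interior_subset (hball ?_)⟩
  rw [Metric.mem_ball]
  have : dist (fun j => x j - δ / 2 : Fin d → ℝ) x ≤ δ / 2 := by
    refine dist_pi_le_iff (by linarith) |>.2 fun j => ?_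
    have : dist (x j - δ / 2) (x j) = δ / 2 := by
      rw [Real.dist_eq, show x j - δ / 2 - x j = -(δ / 2) by ring, abs_neg,
        abs_of_nonneg (by linarith)]
    simpa using this.le
  linarith

lemma aux_extract {lam : Fin r → ℝ} {C : Fin r → Set (Fin d → ℝ)} {x : Fin d → ℝ}
    (hx : x ∈ ∑ i, lam i • C i) :
    ∃ v : Fin r → (Fin d → ℝ), (∀ i, v i ∈ C i) ∧ x = ∑ i, lam i • v i := by
  obtain ⟨g, hg, hgx⟩ := (Set.mem_fintype_sum _ _).1 hx
  choose v hv hveq using fun i => Set.mem_smul_set.1 (hg i)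
  refine ⟨v, hv, ?_⟩
  rw [← hgx]
  exact (Finset.sum_congr rfl fun i _ => (hveq i).symm)

lemma aux_subset_big {lam : Fin r → ℝ} {A : Fin r → Set (Fin d → ℝ)} {α : ℝ}
    (hα : 0 < α) (hlam : ∀ i, 0 ≤ lam i) (hsum : ∑ i, lam i = α) :
    (∑ i, lam i • convexHull ℝ (A i)) ⊆ α • convexHull ℝ (⋃ i, A i) := by
  intro x hx
  obtain ⟨v, hv, rfl⟩ := aux_extract hx
  refine ⟨∑ i, (lam i / α) • v i, ?_, ?_⟩
  · refine (convex_convexHull ℝ _).sum_mem (fun i _ => div_nonneg (hlam i) hα.le) ?_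
      (fun i _ => convexHull_mono (Set.subset_iUnion A i) (hv i))
    rw [← Finset.sum_div, hsum, div_self hα.ne']
  · show α • (∑ i, (lam i / α) • v i) = ∑ i, lam i • v i
    rw [Finset.smul_sum]
    refine Finset.sum_congr rfl fun i _ => ?_
    rw [smul_smul, mul_div_cancel₀ _ hα.ne']

lemma aux_decompose {A : Fin r → Set (Fin d → ℝ)} (hA : ∀ i, (A i).Nonempty)
    {α : ℝ} (hα : 0 < α) {c : Fin d → ℝ} (hc : c ∈ convexHull ℝ (⋃ i, A i)) :
    ∃ lam : Fin r → ℝ, (∀ i, 0 ≤ lam i) ∧ ∑ i, lam i = α ∧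
      α • c ∈ ∑ i, lam i • convexHull ℝ (A i) := by
  classical
  rcases Nat.eq_zero_or_pos r with hr | hr
  · subst hr
    rw [Set.iUnion_of_empty, convexHull_empty] at hc
    exact absurd hc (Set.notMem_empty c)
  haveI : Nonempty (Fin r) := ⟨⟨0, hr⟩⟩
  rw [convexHull_eq] at hc
  obtain ⟨ι, t, w, z, hw0, hw1, hz, hcm⟩ := hc
  choose idx hidx using fun k (hk : k ∈ t) => Set.mem_iUnion.1 (hz k hk)
  set f : ι → Fin r := fun k => if hk : k ∈ t then idx k hk else Classical.arbitrary _ with hf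
  have hzf : ∀ k ∈ t, z k ∈ A (f k) := by
    intro k hk
    simp only [hf, dif_pos hk]
    exact hidx k hk
  set lam : Fin r → ℝ := fun i => α * ∑ k ∈ t.filter (fun k => f k = i), w k with hlam
  have hmaps : ∀ k ∈ t, f k ∈ (Finset.univ : Finset (Fin r)) := fun _ _ => Finset.mem_univ _
  have hlam0 : ∀ i, 0 ≤ lam i := fun i =>
    mul_nonneg hα.le (Finset.sum_nonneg fun k hk => hw0 k (Finset.mem_filter.1 hk).1)
  have hlamsum : ∑ i, lam i = α := by
    rw [hlam]
    rw [← Finset.mul_sum, Finset.sum_fiberwise_of_maps_to hmaps, hw1, mul_one]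
  refine ⟨lam, hlam0, hlamsum, ?_⟩
  have hc' : α • c = ∑ i, ∑ k ∈ t.filter (fun k => f k = i), (α * w k) • z k := by
    rw [Finset.sum_fiberwise_of_maps_to hmaps, ← hcm,
      Finset.centerMass_eq_of_sum_1 _ _ hw1, Finset.smul_sum]
    exact Finset.sum_congr rfl fun k _ => smul_smul _ _ _
  rw [hc']
  refine Set.finset_sum_mem_finset_sum _ _ _ fun i _ => ?_
  rcases eq_or_lt_of_le (Finset.sum_nonneg fun k hk => hw0 k (Finset.mem_filter.1 hk).1 :
      (0:ℝ) ≤ ∑ k ∈ t.filter (fun k => f k = i), w k) with h0 | hpos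
  · have hall : ∀ k ∈ t.filter (fun k => f k = i), w k = 0 := by
      intro k hk
      exact (Finset.sum_eq_zero_iff_of_nonneg
        (fun k hk => hw0 k (Finset.mem_filter.1 hk).1)).1 h0.symm k hk
    have h1 : ∑ k ∈ t.filter (fun k => f k = i), (α * w k) • z k = 0 := by
      refine Finset.sum_eq_zero fun k hk => ?_
      rw [hall k hk, mul_zero, zero_smul]
    have h2 : lam i = 0 := by
      have : lam i = α * ∑ k ∈ t.filter (fun k => f k = i), w k := rfl
      rw [this, ← h0, mul_zero]
    rw [h1, h2, Set.zero_smul_set ((convexHull_nonempty_iff.2 (hA i)))]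
    exact Set.zero_mem_zero
  · have hmem : (t.filter (fun k => f k = i)).centerMass w z ∈ convexHull ℝ (A i) := by
      refine Finset.centerMass_mem_convexHull _
        (fun k hk => hw0 k (Finset.mem_filter.1 hk).1) hpos fun k hk => ?_
      have := hzf k (Finset.mem_filter.1 hk).1
      rwa [(Finset.mem_filter.1 hk).2] at this
    refine ⟨_, hmem, ?_⟩
    show lam i • (t.filter (fun k => f k = i)).centerMass w z =
      ∑ k ∈ t.filter (fun k => f k = i), (α * w k) • z k
    have hli : lam i = α * ∑ k ∈ t.filter (fun k => f k = i), w k := rfl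
    rw [Finset.centerMass, smul_smul, hli, mul_assoc, mul_inv_cancel₀ hpos.ne', mul_one,
      Finset.smul_sum]
    exact Finset.sum_congr rfl fun k _ => smul_smul _ _ _

lemma aux_equiv (Γ : Fin r → Finset (Fin d → ℕ)) (hne : ∀ i, (Γ i).Nonempty)
    {α : ℝ} (hα : 0 < α) (x : Fin d → ℝ) :
    x ∈ interior (α • convexHull ℝ (⋃ i, toReal '' (↑(Γ i) : Set (Fin d → ℕ))) +
        {v : Fin d → ℝ | ∀ j, 0 ≤ v j}) ↔
      ∃ lam : Fin r → ℝ, ((∀ i, 0 ≤ lam i) ∧ ∑ i, lam i = α) ∧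
        x ∈ interior ((∑ i, lam i • convexHull ℝ (toReal '' (↑(Γ i) : Set (Fin d → ℕ)))) +
          {v : Fin d → ℝ | ∀ j, 0 ≤ v j}) := by
  have hAne : ∀ i, (toReal '' (↑(Γ i) : Set (Fin d → ℕ))).Nonempty := fun i =>
    (Finset.coe_nonempty.2 (hne i)).image _
  constructor
  · intro hx
    obtain ⟨ε, hε, hmem⟩ := aux_exists_eps hx
    obtain ⟨u, hu, v, hv, huv⟩ := hmem
    obtain ⟨c, hc, rfl⟩ := Set.mem_smul_set.1 hu
    obtain ⟨lam, h0, hsum, hmem'⟩ := aux_decompose hAne hα hc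
    refine ⟨lam, ⟨h0, hsum⟩, aux_mem_interior hε ?_⟩
    rw [← huv]
    exact Set.add_mem_add hmem' hv
  · rintro ⟨lam, ⟨h0, hsum⟩, hx⟩
    exact interior_mono (Set.add_subset_add (aux_subset_big hα h0 hsum)
      Set.Subset.rfl) hx

end Aux

/-- Monomial incarnation of the summation formula
`J((a_1+⋯+a_r)^α) = Σ_{λ_1+⋯+λ_r=α} J(a_1^{λ_1}⋯a_r^{λ_r})`
(Corollary `c:2` of Jow–Miller combined with Howald's formula): for finite
nonempty `Γ_1, …, Γ_r ⊆ ℕ^d` and `α > 0`, the ideal generated by the monomials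
`x^m` with `m + 𝟙 ∈ interior(α·conv(Γ_1 ∪ ⋯ ∪ Γ_r) + ℝ^d_{≥0})` equals the sum
over `λ ∈ ℝ^r_{≥0}` with `λ_1 + ⋯ + λ_r = α` of the ideals generated by the
monomials `x^m` with `m + 𝟙 ∈ interior(λ_1·conv(Γ_1) + ⋯ + λ_r·conv(Γ_r) + ℝ^d_{≥0})`. -/
theorem stmt7 {d r : ℕ} (Γ : Fin r → Finset (Fin d → ℕ))
    (hne : ∀ i, (Γ i).Nonempty) (α : ℝ) (hα : 0 < α) :
    Ideal.span {p : MvPolynomial (Fin d) ℂ |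
        ∃ m : Fin d → ℕ,
          (fun j => (m j : ℝ) + 1) ∈
            interior (α • convexHull ℝ (⋃ i, toReal '' (↑(Γ i) : Set (Fin d → ℕ))) +
              {v : Fin d → ℝ | ∀ j, 0 ≤ v j}) ∧
          p = monoOf m}
      = ⨆ (lam : Fin r → ℝ) (_ : (∀ i, 0 ≤ lam i) ∧ ∑ i, lam i = α),
          Ideal.span {p : MvPolynomial (Fin d) ℂ |
            ∃ m : Fin d → ℕ,
              (fun j => (m j : ℝ) + 1) ∈
                interior ((∑ i, lam i • convexHull ℝ (toReal '' (↑(Γ i) : Set (Fin d → ℕ)))) +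
                  {v : Fin d → ℝ | ∀ j, 0 ≤ v j}) ∧
              p = monoOf m} := by
  apply le_antisymm
  · rw [Ideal.span_le]
    rintro p ⟨m, hm, rfl⟩
    obtain ⟨lam, hlam, hmem⟩ := (aux_equiv Γ hne hα _).1 hm
    have h1 : monoOf m ∈ Ideal.span {p : MvPolynomial (Fin d) ℂ |
        ∃ m : Fin d → ℕ,
          (fun j => (m j : ℝ) + 1) ∈
            interior ((∑ i, lam i • convexHull ℝ (toReal '' (↑(Γ i) : Set (Fin d → ℕ)))) +
              {v : Fin d → ℝ | ∀ j, 0 ≤ v j}) ∧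
          p = monoOf m} := Ideal.subset_span ⟨m, hmem, rfl⟩
    exact le_iSup₂ (f := fun (lam : Fin r → ℝ)
      (_ : (∀ i, 0 ≤ lam i) ∧ ∑ i, lam i = α) => Ideal.span {p : MvPolynomial (Fin d) ℂ |
        ∃ m : Fin d → ℕ,
          (fun j => (m j : ℝ) + 1) ∈
            interior ((∑ i, lam i • convexHull ℝ (toReal '' (↑(Γ i) : Set (Fin d → ℕ)))) +
              {v : Fin d → ℝ | ∀ j, 0 ≤ v j}) ∧
          p = monoOf m}) lam hlam h1
  · refine iSup_le fun lam => iSup_le fun hlam => Ideal.span_mono ?_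
    rintro p ⟨m, hm, rfl⟩
    exact ⟨m, (aux_equiv Γ hne hα _).2 ⟨lam, hlam, hm⟩, rfl⟩
end

section
/- Let C_1, …, C_r ⊆ ℝ^d be nonempty convex sets and let α > 0 be a real number. Then interior(α·conv(C_1 ∪ ⋯ ∪ C_r) + ℝ^d_{≥0}) equals the union, over all λ = (λ_1,…,λ_r) ∈ ℝ^r_{≥0} with λ_1 + ⋯ + λ_r = α, of the sets interior(λ_1·C_1 + ⋯ + λ_r·C_r + ℝ^d_{≥0}). -/
open Pointwise

private lemma interior_add_orthant {d : ℕ} (S : Set (Fin d → ℝ)) :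
    interior (S + {v : Fin d → ℝ | ∀ j, 0 ≤ v j})
      = S + {v : Fin d → ℝ | ∀ j, 0 < v j} := by
  have hQopen : IsOpen {v : Fin d → ℝ | ∀ j, 0 < v j} := by
    have h : {v : Fin d → ℝ | ∀ j, 0 < v j} = ⋂ j, (fun v : Fin d → ℝ => v j) ⁻¹' Set.Ioi 0 := by
      ext v; simp [Set.mem_iInter]
    rw [h]
    exact isOpen_iInter_of_finite fun j => (continuous_apply j).isOpen_preimage _ isOpen_Ioi
  apply Set.Subset.antisymm
  · intro x hx
    obtain ⟨ε, hε, hball⟩ := Metric.isOpen_iff.1 isOpen_interior x hx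
    have hεhalf : (0 : ℝ) < ε / 2 := by linarith
    have hy : (fun j => x j - ε / 2) ∈ S + {v : Fin d → ℝ | ∀ j, 0 ≤ v j} := by
      apply interior_subset
      apply hball
      rw [Metric.mem_ball, dist_pi_lt_iff hε]
      intro j
      rw [Real.dist_eq, show x j - ε / 2 - x j = -(ε / 2) by ring, abs_neg,
        abs_of_pos hεhalf]
      linarith
    obtain ⟨s, hs, p, hp, hsp⟩ := hy
    refine ⟨s, hs, p + fun _ => ε / 2, fun j => by simpa using lt_add_of_le_of_pos (hp j) hεhalf, ?_⟩
    funext j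
    have := congrFun hsp j
    simp only [Pi.add_apply] at this ⊢
    linarith
  · apply interior_maximal
    · exact Set.add_subset_add_left fun v hv j => (hv j).le
    · exact hQopen.add_left

/-- For nonempty convex sets `C_1, …, C_r ⊆ ℝ^d` and `α > 0`,
`interior(α·conv(C_1 ∪ ⋯ ∪ C_r) + ℝ^d_{≥0})` is the union over `λ ∈ ℝ^r_{≥0}`
with `λ_1 + ⋯ + λ_r = α` of `interior(λ_1·C_1 + ⋯ + λ_r·C_r + ℝ^d_{≥0})`. -/
theorem stmt8 {d r : ℕ} (C : Fin r → Set (Fin d → ℝ))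
    (hne : ∀ i, (C i).Nonempty) (hconv : ∀ i, Convex ℝ (C i))
    (α : ℝ) (hα : 0 < α) :
    interior (α • convexHull ℝ (⋃ i, C i) + {v : Fin d → ℝ | ∀ j, 0 ≤ v j})
      = ⋃ (lam : Fin r → ℝ) (_ : (∀ i, 0 ≤ lam i) ∧ ∑ i, lam i = α),
          interior ((∑ i, lam i • C i) + {v : Fin d → ℝ | ∀ j, 0 ≤ v j}) := by
  classical
  have key : α • convexHull ℝ (⋃ i, C i)
      = ⋃ (lam : Fin r → ℝ) (_ : (∀ i, 0 ≤ lam i) ∧ ∑ i, lam i = α),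
          (∑ i, lam i • C i) := by
    ext x
    constructor
    · rintro ⟨y, hy, rfl⟩
      rw [convexHull_eq] at hy
      obtain ⟨ι, t, w, z, hw0, hw1, hz, hcm⟩ := hy
      have ht : t.Nonempty := Finset.nonempty_of_sum_ne_zero (by rw [hw1]; norm_num)
      obtain ⟨k0, hk0⟩ := ht
      obtain ⟨i0, hi0⟩ := Set.mem_iUnion.1 (hz k0 hk0)
      have hch : ∀ k : ι, ∃ i : Fin r, k ∈ t → z k ∈ C i := by
        intro k
        by_cases hk : k ∈ t
        · obtain ⟨i, hi⟩ := Set.mem_iUnion.1 (hz k hk); exact ⟨i, fun _ => hi⟩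
        · exact ⟨i0, fun h => absurd h hk⟩
      choose f hf using hch
      set lam : Fin r → ℝ := fun i => ∑ k ∈ t.filter (fun k => f k = i), α * w k with hlam
      have hlam0 : ∀ i, 0 ≤ lam i := fun i =>
        Finset.sum_nonneg fun k hk => mul_nonneg hα.le (hw0 k (Finset.mem_of_mem_filter k hk))
      have hlamsum : ∑ i, lam i = α := by
        rw [hlam]
        rw [Finset.sum_fiberwise_of_maps_to (fun k _ => Finset.mem_univ (f k))]
        rw [← Finset.mul_sum, hw1, mul_one]
      refine Set.mem_iUnion₂.2 ⟨lam, ⟨hlam0, hlamsum⟩, ?_⟩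
      rw [Set.mem_fintype_sum]
      refine ⟨fun i => ∑ k ∈ t.filter (fun k => f k = i), (α * w k) • z k, fun i => ?_, ?_⟩
      · dsimp only
        rcases eq_or_lt_of_le (hlam0 i) with h0 | hpos
        · have hz0 : ∀ k ∈ t.filter (fun k => f k = i), α * w k = 0 := by
            intro k hk
            have := (Finset.sum_eq_zero_iff_of_nonneg fun k hk =>
              mul_nonneg hα.le (hw0 k (Finset.mem_of_mem_filter k hk))).1 h0.symm
            exact this k hk
          have : (∑ k ∈ t.filter (fun k => f k = i), (α * w k) • z k) = 0 :=
            Finset.sum_eq_zero fun k hk => by rw [hz0 k hk, zero_smul]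
          rw [this, ← h0, Set.zero_smul_set (hne i)]
          exact Set.mem_zero.2 rfl
        · have hin : (lam i)⁻¹ • ∑ k ∈ t.filter (fun k => f k = i), (α * w k) • z k ∈ C i := by
            rw [Finset.smul_sum]
            simp_rw [smul_smul]
            apply (hconv i).sum_mem
            · intro k hk
              exact mul_nonneg (inv_nonneg.2 (hlam0 i))
                (mul_nonneg hα.le (hw0 k (Finset.mem_of_mem_filter k hk)))
            · rw [← Finset.mul_sum]
              exact inv_mul_cancel₀ hpos.ne'
            · intro k hk
              have : f k = i := by simpa using (Finset.mem_filter.1 hk).2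
              rw [← this]
              exact hf k (Finset.mem_of_mem_filter k hk)
          have := Set.smul_mem_smul_set (a := lam i) hin
          rwa [smul_inv_smul₀ hpos.ne'] at this
      · dsimp only
        rw [Finset.sum_fiberwise_of_maps_to (fun k _ => Finset.mem_univ (f k))]
        rw [← hcm, Finset.centerMass_eq_of_sum_1 _ _ hw1, Finset.smul_sum]
        exact Finset.sum_congr rfl fun k _ => by rw [smul_smul]
    · intro hx
      obtain ⟨lam, ⟨hlam0, hlamsum⟩, hmem⟩ := Set.mem_iUnion₂.1 hx
      rw [Set.mem_fintype_sum] at hmem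
      obtain ⟨g, hg, hsum⟩ := hmem
      have hc : ∀ i, ∃ c ∈ C i, lam i • c = g i := fun i => Set.mem_smul_set.1 (hg i)
      choose c hc1 hc2 using hc
      refine ⟨∑ i, (lam i / α) • c i, ?_, ?_⟩
      · apply (convex_convexHull ℝ _).sum_mem
        · intro i _; exact div_nonneg (hlam0 i) hα.le
        · rw [← Finset.sum_div, hlamsum, div_self hα.ne']
        · intro i _
          exact subset_convexHull ℝ _ (Set.mem_iUnion.2 ⟨i, hc1 i⟩)
      · dsimp only
        rw [Finset.smul_sum, ← hsum]
        refine Finset.sum_congr rfl fun i _ => ?_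
        rw [smul_smul, mul_div_cancel₀ _ hα.ne', hc2]
  rw [interior_add_orthant, key, Set.iUnion_add]
  refine Set.iUnion_congr fun lam => ?_
  rw [Set.iUnion_add]
  exact Set.iUnion_congr fun hl => (interior_add_orthant _).symm
end

section
/- Let Γ_1, …, Γ_r ⊆ ℕ^d be finite nonempty sets and let α > 0 be a real number. Then the collection of ideals of ℂ[x_1,…,x_d] of the form ⟨x^m : m ∈ ℕ^d and m + 𝟙 ∈ interior(λ_1·conv(Γ_1) + ⋯ + λ_r·conv(Γ_r) + ℝ^d_{≥0})⟩, as λ = (λ_1,…,λ_r) ranges over all vectors in ℝ^r_{≥0} with λ_1 + ⋯ + λ_r = α, is a finite set of ideals. (This is the monomial incarnation of the paper's claim that there are only finitely many distinct multiplier ideals J(a_1^{λ_1}⋯a_r^{λ_r}) with λ_1+⋯+λ_r = α.) -/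
/-! Every `Q_λ = ∑ λᵢ • conv Γᵢ` lies below the fixed vector `α • c`, where `c` bounds all exponents
in the `Γᵢ`. Above that level, membership in `Q_λ + ℝ^d_{≥0}` (and in its interior) does not depend on
a coordinate, so every exponent `m` of the ideal attached to `λ` can be lowered to `m ⊓ K` with
`K = ⌈α • c⌉₊`, and `x^(m ⊓ K)` divides `x^m`. Hence each of these ideals is generated by monomials
with exponents in the finite box `Iic K`, and there are only finitely many such ideals. -/

open Pointwise

open Set

section Orthant

variable {ι : Type*}

lemma fintype_sum_smul_convexHull_subset_Iic {E : Type*} [Fintype ι] [AddCommGroup E]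
    [PartialOrder E] [IsOrderedAddMonoid E] [Module ℝ E] [PosSMulMono ℝ E]
    (lam : ι → ℝ) (hlam : ∀ i, 0 ≤ lam i) (A : ι → Set E) (b : E) (hA : ∀ i, A i ⊆ Iic b) :
    ∑ i, lam i • convexHull ℝ (A i) ⊆ Iic ((∑ i, lam i) • b) := by
  intro x hx
  obtain ⟨g, hg, rfl⟩ := (Set.mem_fintype_sum _ x).mp hx
  rw [Finset.sum_smul]
  refine Finset.sum_le_sum fun i _ => ?_
  obtain ⟨y, hy, hyg⟩ := hg i
  rw [← hyg]
  exact smul_le_smul_of_nonneg_left (convexHull_min (hA i) (convex_Iic b) hy) (hlam i)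

/-- Above the bound `b j`, membership in `Q + [0, ∞)^ι` does not depend on the `j`-th coordinate,
so `v'` has a neighbourhood obtained by translating one of `v`. -/
lemma mem_interior_add_Ici_of_ne_imp_lt [Finite ι] {Q : Set (ι → ℝ)} {b v v' : ι → ℝ}
    (hQ : Q ⊆ Iic b) (hv : v ∈ interior (Q + Ici 0)) (hv' : ∀ j, v' j ≠ v j → b j < v' j) :
    v' ∈ interior (Q + Ici 0) := by
  set N : Set (ι → ℝ) := (· + (v - v')) ⁻¹' interior (Q + Ici 0) ∩
    {j | v' j ≠ v j}.pi fun j => Ioi (b j)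
  have hN_open : IsOpen N :=
    (isOpen_interior.preimage (continuous_add_const _)).inter
      (isOpen_set_pi (Set.toFinite _) fun _ _ => isOpen_Ioi)
  refine interior_maximal ?_ hN_open ⟨by simpa using hv, hv'⟩
  rintro u ⟨hu, hub⟩
  obtain ⟨q, hq, w, hw, hqw⟩ := interior_subset hu
  change q + w = u + (v - v') at hqw
  refine ⟨q, hq, w - (v - v'), fun j => ?_, ?_⟩
  · have hqwj := congrFun hqw j
    simp only [Pi.add_apply, Pi.sub_apply, Pi.zero_apply] at hqwj ⊢
    by_cases hj : v' j = v j
    · simpa [hj] using hw j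
    · have hqj : q j ≤ b j := hQ hq j
      have huj : b j < u j := hub j hj
      linarith
  · change q + (w - (v - v')) = u
    rw [← add_sub_assoc, hqw, add_sub_cancel_right]

end Orthant

section MonomialIdeal

variable {d : ℕ}

lemma monoOf_dvd_monoOf {m m' : Fin d → ℕ} (h : m' ≤ m) : monoOf m' ∣ monoOf m :=
  MvPolynomial.monomial_dvd_monomial.mpr ⟨Or.inr fun j => h j, one_dvd _⟩

noncomputable def monomialIdeal (S : Set (Fin d → ℕ)) : Ideal (MvPolynomial (Fin d) ℂ) :=
  Ideal.span {p | ∃ m ∈ S, p = monoOf m}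

lemma monoOf_mem_monomialIdeal {S : Set (Fin d → ℕ)} {m : Fin d → ℕ} (hm : m ∈ S) :
    monoOf m ∈ monomialIdeal S :=
  Ideal.subset_span ⟨m, hm, rfl⟩

lemma monomialIdeal_eq_of_forall_exists_le {S T : Set (Fin d → ℕ)} (hTS : T ⊆ S)
    (h : ∀ m ∈ S, ∃ m' ∈ T, m' ≤ m) : monomialIdeal S = monomialIdeal T := by
  refine le_antisymm (Ideal.span_le.mpr ?_) (Ideal.span_le.mpr ?_)
  · rintro p ⟨m, hm, rfl⟩
    obtain ⟨m', hm', hle⟩ := h m hm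
    exact (monomialIdeal T).mem_of_dvd (monoOf_dvd_monoOf hle) (monoOf_mem_monomialIdeal hm')
  · rintro p ⟨m, hm, rfl⟩
    exact monoOf_mem_monomialIdeal (hTS hm)

end MonomialIdeal

lemma lt_min_natCeil_add_one_of_ne {a : ℝ} {m : ℕ} (h : min m ⌈a⌉₊ ≠ m) :
    a < (min m ⌈a⌉₊ : ℕ) + 1 := by
  rw [min_eq_right (le_of_not_ge fun hm => h (min_eq_left hm))]
  exact (Nat.le_ceil a).trans_lt (lt_add_one _)

theorem stmt9_general {d r : ℕ} (Γ : Fin r → Finset (Fin d → ℕ))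
    (α : ℝ) :
    Set.Finite {I : Ideal (MvPolynomial (Fin d) ℂ) |
      ∃ lam : Fin r → ℝ, (∀ i, 0 ≤ lam i) ∧ (∑ i, lam i = α) ∧
        I = Ideal.span {p : MvPolynomial (Fin d) ℂ |
          ∃ m : Fin d → ℕ,
            (fun j => (m j : ℝ) + 1) ∈
              interior ((∑ i, lam i • convexHull ℝ (toReal '' (↑(Γ i) : Set (Fin d → ℕ)))) +
                {v : Fin d → ℝ | ∀ j, 0 ≤ v j}) ∧
            p = monoOf m}} := by
  obtain ⟨c, hc⟩ : ∃ c : Fin d → ℕ, ∀ i, ∀ γ ∈ Γ i, γ ≤ c :=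
    ⟨Finset.univ.sup fun i => (Γ i).sup id, fun i γ hγ =>
      (Finset.le_sup (f := id) hγ).trans
        (Finset.le_sup (f := fun i => (Γ i).sup id) (Finset.mem_univ i))⟩
  set K : Fin d → ℕ := fun j => ⌈α * c j⌉₊
  refine ((Set.finite_Iic K).finite_subsets.image monomialIdeal).subset ?_
  rintro I ⟨lam, hlam, hsum, rfl⟩
  have hQ : ∑ i, lam i • convexHull ℝ (toReal '' (↑(Γ i) : Set (Fin d → ℕ))) ⊆
      Iic (α • toReal c) :=
    hsum ▸ fintype_sum_smul_convexHull_subset_Iic lam hlam _ _ fun i =>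
      image_subset_iff.mpr fun γ hγ j => Nat.cast_le.mpr (hc i γ hγ j)
  refine ⟨_, inter_subset_right, (monomialIdeal_eq_of_forall_exists_le inter_subset_left
    fun m hm => ⟨m ⊓ K, ⟨?_, mem_Iic.mpr inf_le_right⟩, inf_le_left⟩).symm⟩
  refine mem_interior_add_Ici_of_ne_imp_lt hQ hm fun j hj => ?_
  exact lt_min_natCeil_add_one_of_ne fun h => hj (congrArg (fun n : ℕ => (n : ℝ) + 1) h)

/-- Finiteness of the collection of (monomial incarnations of) multiplier
ideals `J(a_1^{λ_1}⋯a_r^{λ_r})` as `λ` ranges over nonnegative real vectors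
with `λ_1 + ⋯ + λ_r = α`. -/
theorem stmt9 {d r : ℕ} (Γ : Fin r → Finset (Fin d → ℕ))
    (hne : ∀ i, (Γ i).Nonempty) (α : ℝ) (hα : 0 < α) :
    Set.Finite {I : Ideal (MvPolynomial (Fin d) ℂ) |
      ∃ lam : Fin r → ℝ, (∀ i, 0 ≤ lam i) ∧ (∑ i, lam i = α) ∧
        I = Ideal.span {p : MvPolynomial (Fin d) ℂ |
          ∃ m : Fin d → ℕ,
            (fun j => (m j : ℝ) + 1) ∈
              interior ((∑ i, lam i • convexHull ℝ (toReal '' (↑(Γ i) : Set (Fin d → ℕ)))) +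
                {v : Fin d → ℝ | ∀ j, 0 ≤ v j}) ∧
            p = monoOf m}} :=
  stmt9_general Γ α
end
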